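/- arXiv:1812.09606 — 3 statements merged into one kernel-verified Lean document; each statement's English description precedes it below -/
import Mathlib

section
/- For n ≥ 2 and integers b₁ ≥ b₂ ≥ ⋯ ≥ b_{n−1} ≥ 0 with b₁ ≤ 3 (and b_{n−1} = 0 if n is even), the map (a₂,…,a_n) ↦ Σ_{i=2}^{n} a_i·(a_i + 2(n−i)) is injective on the set T = {(a₂,…,a_n) ∈ ℤ^{n−1} : b₁ ≥ a₂ ≥ b₂ ≥ a₃ ≥ ⋯ ≥ b_{n−1} ≥ |a_n|} when n is even, respectively T = {(a₂,…,a_n) ∈ ℤ^{n−1} : b₁ ≥ a₂ ≥ b₂ ≥ ⋯ ≥ b_{n−1} ≥ a_n ≥ 0} when n is odd. -/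
/-!
Put `D i = a i - a' i` and `W i = a i + a' i + 2 (n - i)`; equality of the two forms says
`∑ D i * W i = 0`. Interlacing makes `∑ |D i|` telescope to at most `b 1 ≤ 3`, and as `W ≡ D`
and `x * x ≡ |x|` mod 2, this sum is even, hence at most `2`. Both sequences are nonnegative and
antitone, so `W` is positive on the support of `D` and strictly decreasing. At the support point
`i₀` where `W` is largest this gives `|D i₀| * W i₀ ≤ (2 - |D i₀|) * (W i₀ - 1)`, which is absurd.
-/

open Finset

namespace Finset

variable {ι : Type*} {s : Finset ι}

theorem sum_sub_mul_add_eq_zero {f g w : ι → ℤ}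
    (h : ∑ i ∈ s, f i * (f i + w i) = ∑ i ∈ s, g i * (g i + w i)) :
    ∑ i ∈ s, (f i - g i) * (f i + g i + w i) = 0 := by
  rw [← sub_eq_zero, ← sum_sub_distrib] at h
  rw [← h]
  exact sum_congr rfl fun i _ ↦ by ring

theorem even_sum_abs_of_sum_mul_eq_zero {D W : ι → ℤ} (hpar : ∀ i ∈ s, Even (W i - D i))
    (h : ∑ i ∈ s, D i * W i = 0) : Even (∑ i ∈ s, |D i|) := by
  have hsplit : ∀ i ∈ s, D i * W i - |D i| = D i * (W i - D i) + |D i| * (|D i| - 1) := by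
    intro i _
    have := abs_mul_abs_self (D i)
    linear_combination (-1 : ℤ) * this
  have heven : Even (∑ i ∈ s, (D i * W i - |D i|)) := by
    refine even_iff_two_dvd.2 (dvd_sum fun i hi ↦ ?_)
    rw [hsplit i hi]
    exact ((hpar i hi).mul_left _).add (Int.even_mul_pred_self _) |>.two_dvd
  rwa [sum_sub_distrib, h, zero_sub, even_neg] at heven

theorem eq_zero_of_sum_mul_eq_zero_of_sum_abs_le_two [DecidableEq ι] {D W : ι → ℤ}
    (hpos : ∀ i ∈ s, D i ≠ 0 → 0 < W i) (hinj : Set.InjOn W {i | i ∈ s ∧ D i ≠ 0})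
    (habs : ∑ i ∈ s, |D i| ≤ 2) (h : ∑ i ∈ s, D i * W i = 0) : ∀ i ∈ s, D i = 0 := by
  by_contra! ⟨j, hj, hDj⟩
  obtain ⟨i₀, hi₀, hmax⟩ :=
    (s.filter (D · ≠ 0)).exists_max_image W ⟨j, mem_filter.2 ⟨hj, hDj⟩⟩
  obtain ⟨hi₀s, hD₀⟩ := mem_filter.1 hi₀
  have hW₀ := hpos i₀ hi₀s hD₀
  have hterm : ∀ i ∈ s.erase i₀, |D i * W i| ≤ |D i| * (W i₀ - 1) := by
    intro i hi
    obtain ⟨hne, his⟩ := mem_erase.1 hi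
    rcases eq_or_ne (D i) 0 with hDi | hDi
    · simp [hDi]
    have hlt : W i < W i₀ := (hmax i (mem_filter.2 ⟨his, hDi⟩)).lt_of_ne
      fun hW ↦ hne (hinj ⟨his, hDi⟩ ⟨hi₀s, hD₀⟩ hW)
    rw [abs_mul, abs_of_pos (hpos i his hDi)]
    exact mul_le_mul_of_nonneg_left (by omega) (abs_nonneg _)
  have hrest : ∑ i ∈ s.erase i₀, |D i| = ∑ i ∈ s, |D i| - |D i₀| := by
    rw [← add_sum_erase s _ hi₀s]; ring
  have hsplit : D i₀ * W i₀ + ∑ i ∈ s.erase i₀, D i * W i = 0 := by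
    rw [add_sum_erase s (fun i ↦ D i * W i) hi₀s, h]
  have key : |D i₀| * W i₀ ≤ (2 - |D i₀|) * (W i₀ - 1) :=
    calc |D i₀| * W i₀ = |D i₀ * W i₀| := by rw [abs_mul, abs_of_pos hW₀]
      _ = |∑ i ∈ s.erase i₀, D i * W i| := by rw [eq_neg_of_add_eq_zero_left hsplit, abs_neg]
      _ ≤ ∑ i ∈ s.erase i₀, |D i * W i| := abs_sum_le_sum_abs _ _
      _ ≤ ∑ i ∈ s.erase i₀, |D i| * (W i₀ - 1) := sum_le_sum hterm
      _ = (∑ i ∈ s, |D i| - |D i₀|) * (W i₀ - 1) := by rw [← sum_mul, hrest]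
      _ ≤ (2 - |D i₀|) * (W i₀ - 1) := by gcongr; omega
  nlinarith [abs_pos.2 hD₀]

theorem sum_Icc_le_sub_of_le_sub_pred {x c : ℕ → ℤ} {k m : ℕ} (hkm : k ≤ m)
    (h : ∀ i ∈ Icc (k + 1) m, x i ≤ c (i - 1) - c i) : ∑ i ∈ Icc (k + 1) m, x i ≤ c k - c m := by
  induction m, hkm using Nat.le_induction with
  | base => simp
  | succ m _ ih =>
    rw [sum_Icc_succ_top (by omega)]
    have hprev := ih fun i hi ↦ h i (Icc_subset_Icc_right (by omega) hi)
    have hlast := h (m + 1) (mem_Icc.2 ⟨by omega, le_rfl⟩)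
    rw [Nat.add_sub_cancel] at hlast
    linarith

end Finset

/-- The set `T` of the odd case. For even `n`, `b (n-1) = 0` makes `|c n| ≤ b (n-1)` equivalent
to `0 ≤ c n ≤ b (n-1)`, so both cases land here. -/
def IsInterlacing (n : ℕ) (b c : ℕ → ℤ) : Prop :=
  (∀ i, 2 ≤ i → i ≤ n - 1 → c i ≤ b (i - 1) ∧ b i ≤ c i) ∧ 0 ≤ c n ∧ c n ≤ b (n - 1)

theorem isInterlacing_of_parity {n : ℕ} {b c : ℕ → ℤ} (hbeven : Even n → b (n - 1) = 0)
    (hc : ∀ i, 2 ≤ i → i ≤ n - 1 → c i ≤ b (i - 1) ∧ b i ≤ c i)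
    (hceven : Even n → |c n| ≤ b (n - 1)) (hcodd : ¬ Even n → 0 ≤ c n ∧ c n ≤ b (n - 1)) :
    IsInterlacing n b c := by
  refine ⟨hc, ?_⟩
  by_cases he : Even n
  · have := abs_le.1 (hceven he)
    rw [hbeven he] at this ⊢
    omega
  · exact hcodd he

theorem antitoneOn_Icc_of_succ_le {n : ℕ} {b : ℕ → ℤ}
    (hb : ∀ i, 1 ≤ i → i ≤ n - 2 → b (i + 1) ≤ b i) : AntitoneOn b (Set.Icc 1 (n - 1)) :=
  antitoneOn_of_succ_le Set.ordConnected_Icc fun i _ hi hi' ↦ by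
    rw [Order.succ_eq_add_one] at hi' ⊢
    exact hb i hi.1 (by have := hi'.2; omega)

namespace IsInterlacing

variable {n : ℕ} {b c c' : ℕ → ℤ}

theorem nonneg (hb : AntitoneOn b (Set.Icc 1 (n - 1))) (hc : IsInterlacing n b c) :
    ∀ i ∈ Icc 2 n, 0 ≤ c i := by
  intro i hi
  obtain ⟨h2i, hin⟩ := mem_Icc.1 hi
  obtain ⟨hint, hn₀, hnb⟩ := hc
  rcases (show i ≤ n - 1 ∨ i = n by omega) with hi | rfl
  · have := hb ⟨by omega, hi⟩ ⟨by omega, le_rfl⟩ hi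
    linarith [(hint i h2i hi).2]
  · exact hn₀

theorem antitoneOn (hb : AntitoneOn b (Set.Icc 1 (n - 1))) (hc : IsInterlacing n b c) :
    AntitoneOn c (Set.Icc 2 n) := by
  rintro k ⟨h2k, hkn⟩ l ⟨h2l, hln⟩ hkl
  obtain ⟨hint, -, hnb⟩ := hc
  rcases hkl.eq_or_lt with rfl | hkl
  · exact le_rfl
  have hck := (hint k h2k (by omega)).2
  have hbl : b (l - 1) ≤ b k := hb ⟨by omega, by omega⟩ ⟨by omega, by omega⟩ (by omega)
  rcases (show l ≤ n - 1 ∨ l = n by omega) with hl | rfl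
  · linarith [(hint l h2l hl).1]
  · linarith

theorem abs_sub_le (hc : IsInterlacing n b c) (hc' : IsInterlacing n b c') :
    ∀ i ∈ Icc 2 (n - 1), |c i - c' i| ≤ b (i - 1) - b i := by
  intro i hi
  obtain ⟨h2i, hin⟩ := mem_Icc.1 hi
  obtain ⟨hci, hci'⟩ := hc.1 i h2i hin
  obtain ⟨hc'i, hc'i'⟩ := hc'.1 i h2i hin
  exact abs_sub_le_of_le_of_le hci' hci hc'i' hc'i

theorem sum_abs_sub_le (hn : 2 ≤ n) (hc : IsInterlacing n b c) (hc' : IsInterlacing n b c') :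
    ∑ i ∈ Icc 2 n, |c i - c' i| ≤ b 1 := by
  obtain ⟨m, rfl⟩ : ∃ m, n = m + 1 := ⟨n - 1, by omega⟩
  rw [sum_Icc_succ_top (by omega)]
  have hinner := sum_Icc_le_sub_of_le_sub_pred (k := 1) (by omega) (hc.abs_sub_le hc')
  have hlast := abs_sub_le_of_nonneg_of_le hc.2.1 hc.2.2 hc'.2.1 hc'.2.2
  simp only [Nat.add_sub_cancel] at hinner hlast
  linarith

theorem strictAntiOn_add (hb : AntitoneOn b (Set.Icc 1 (n - 1))) (hc : IsInterlacing n b c)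
    (hc' : IsInterlacing n b c') :
    StrictAntiOn (fun i : ℕ ↦ c i + c' i + 2 * ((n : ℤ) - i)) (Set.Icc 2 n) := by
  intro k hk l hl hkl
  have := hc.antitoneOn hb hk hl hkl.le
  have := hc'.antitoneOn hb hk hl hkl.le
  have : (k : ℤ) < l := by exact_mod_cast hkl
  dsimp only
  linarith

theorem add_pos_of_ne (hb : AntitoneOn b (Set.Icc 1 (n - 1))) (hc : IsInterlacing n b c)
    (hc' : IsInterlacing n b c') {i : ℕ} (hi : i ∈ Icc 2 n) (hne : c i ≠ c' i) :
    0 < c i + c' i + 2 * ((n : ℤ) - i) := by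
  have := hc.nonneg hb i hi
  have := hc'.nonneg hb i hi
  have : (i : ℤ) ≤ n := by exact_mod_cast (mem_Icc.1 hi).2
  omega

end IsInterlacing

theorem so_even_form_injective_b1_le_three_general (n : ℕ) (b a a' : ℕ → ℤ)
    (hbmono : ∀ i, 1 ≤ i → i ≤ n - 2 → b (i + 1) ≤ b i)
    (hb1 : b 1 ≤ 3)
    (hbeven : Even n → b (n - 1) = 0)
    (ha1 : ∀ i, 2 ≤ i → i ≤ n - 1 → a i ≤ b (i - 1) ∧ b i ≤ a i)
    (ha2 : Even n → |a n| ≤ b (n - 1))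
    (ha3 : ¬ Even n → 0 ≤ a n ∧ a n ≤ b (n - 1))
    (ha1' : ∀ i, 2 ≤ i → i ≤ n - 1 → a' i ≤ b (i - 1) ∧ b i ≤ a' i)
    (ha2' : Even n → |a' n| ≤ b (n - 1))
    (ha3' : ¬ Even n → 0 ≤ a' n ∧ a' n ≤ b (n - 1))
    (hsum : ∑ i ∈ Finset.Icc 2 n, a i * (a i + 2 * ((n : ℤ) - (i : ℤ))) =
      ∑ i ∈ Finset.Icc 2 n, a' i * (a' i + 2 * ((n : ℤ) - (i : ℤ)))) :
    ∀ i, 2 ≤ i → i ≤ n → a i = a' i := by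
  intro i h2i hin
  have hb := antitoneOn_Icc_of_succ_le hbmono
  have ha := isInterlacing_of_parity hbeven ha1 ha2 ha3
  have ha' := isInterlacing_of_parity hbeven ha1' ha2' ha3'
  have hform := sum_sub_mul_add_eq_zero hsum
  have habs : ∑ i ∈ Icc 2 n, |a i - a' i| ≤ 2 := by
    obtain ⟨k, hk⟩ := even_sum_abs_of_sum_mul_eq_zero (fun i _ ↦ ⟨a' i + (n - i), by ring⟩) hform
    have := ha.sum_abs_sub_le (by omega) ha'
    omega
  exact sub_eq_zero.1 <| eq_zero_of_sum_mul_eq_zero_of_sum_abs_le_two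
    (fun j hj hne ↦ ha.add_pos_of_ne hb ha' hj (sub_ne_zero.1 hne))
    ((ha.strictAntiOn_add hb ha').injOn.mono fun j hj ↦ Set.mem_Icc.2 (mem_Icc.1 hj.1))
    habs hform i (mem_Icc.2 ⟨h2i, hin⟩)

/-- Corollary 4.3(i) key condition: for `n ≥ 2` and integers
`b 1 ≥ b 2 ≥ ⋯ ≥ b (n-1) ≥ 0` with `b 1 ≤ 3` (and `b (n-1) = 0` if `n` is even),
the quadratic form `(a₂,…,aₙ) ↦ ∑_{i=2}^{n} aᵢ(aᵢ + 2(n-i))` is injective on the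
interlacing set `T` (with `b (n-1) ≥ |aₙ|` when `n` is even, and
`b (n-1) ≥ aₙ ≥ 0` when `n` is odd). -/
theorem so_even_form_injective_b1_le_three (n : ℕ) (hn : 2 ≤ n) (b a a' : ℕ → ℤ)
    (hbmono : ∀ i, 1 ≤ i → i ≤ n - 2 → b (i + 1) ≤ b i)
    (hbnn : 0 ≤ b (n - 1)) (hb1 : b 1 ≤ 3)
    (hbeven : Even n → b (n - 1) = 0)
    (ha1 : ∀ i, 2 ≤ i → i ≤ n - 1 → a i ≤ b (i - 1) ∧ b i ≤ a i)
    (ha2 : Even n → |a n| ≤ b (n - 1))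
    (ha3 : ¬ Even n → 0 ≤ a n ∧ a n ≤ b (n - 1))
    (ha1' : ∀ i, 2 ≤ i → i ≤ n - 1 → a' i ≤ b (i - 1) ∧ b i ≤ a' i)
    (ha2' : Even n → |a' n| ≤ b (n - 1))
    (ha3' : ¬ Even n → 0 ≤ a' n ∧ a' n ≤ b (n - 1))
    (hsum : ∑ i ∈ Finset.Icc 2 n, a i * (a i + 2 * ((n : ℤ) - (i : ℤ))) =
      ∑ i ∈ Finset.Icc 2 n, a' i * (a' i + 2 * ((n : ℤ) - (i : ℤ)))) :
    ∀ i, 2 ≤ i → i ≤ n → a i = a' i :=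
  so_even_form_injective_b1_le_three_general n b a a' hbmono hb1 hbeven ha1 ha2 ha3 ha1' ha2' ha3'
    hsum
end

section
/- Let n ≥ 2 and integers b₁ ≥ 2 = b₂ ≥ b₃ ≥ ⋯ ≥ b_{n−1} ≥ 0. Then the map (a₂,…,a_n) ↦ Σ_{i=2}^{n} a_i·(a_i + 2(n−i)) is injective on T = {(a₂,…,a_n) ∈ ℤ^{n−1} : b₁ ≥ a₂ ≥ b₂ ≥ a₃ ≥ b₃ ≥ ⋯ ≥ b_{n−1} ≥ a_n ≥ 0}. -/
/-!
Write `dᵢ = aᵢ - a'ᵢ` and `sᵢ = aᵢ + a'ᵢ + 2(n - i)`, so that the two values of the form differ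
by `∑ dᵢ sᵢ`. Extending `b` by `bₙ = 0`, both tuples interlace `b`; hence they are antitone and
nonnegative, and `∑_{i>2} |dᵢ| ≤ b₂ - bₙ = 2`. Let `j` be the first index with `dⱼ ≠ 0` and
`D = ∑_{i>j} |dᵢ| ≤ 2`. Then `0 ≤ sᵢ ≤ sⱼ - 2` for `i > j`, and since `dᵢ sᵢ ≡ |dᵢ| (mod 2)`, the
vanishing of `∑ dᵢ sᵢ` makes `|dⱼ| + D` even, so `D ≤ |dⱼ|`. Therefore
`|∑_{i>j} dᵢ sᵢ| ≤ D (sⱼ - 2) < |dⱼ| sⱼ`, a contradiction.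
-/

open Finset

def Interlaces {α : Type*} [LE α] (B x : ℕ → α) (s : Finset ℕ) : Prop :=
  ∀ i ∈ s, B i ≤ x i ∧ x i ≤ B (i - 1)

theorem interlaces_update_zero {α : Type*} [Zero α] [LE α] {b x : ℕ → α} {m n : ℕ} (hm : 0 < m)
    (hx : ∀ i, m ≤ i → i ≤ n - 1 → x i ≤ b (i - 1) ∧ b i ≤ x i)
    (hxn : 0 ≤ x n ∧ x n ≤ b (n - 1)) :
    Interlaces (Function.update b n 0) x (Icc m n) := by
  intro i hi
  rw [mem_Icc] at hi
  rw [Function.update_of_ne (show i - 1 ≠ n by omega)]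
  rcases hi.2.lt_or_eq with hlt | rfl
  · rw [Function.update_of_ne hlt.ne]
    exact (hx i hi.1 (by omega)).symm
  · rw [Function.update_self]
    exact hxn

theorem Interlaces.antitoneOn {α : Type*} [Preorder α] {B x : ℕ → α} {m k : ℕ}
    (hx : Interlaces B x (Icc m k)) : AntitoneOn x (Set.Icc m k) :=
  antitoneOn_of_succ_le Set.ordConnected_Icc fun i _ hi hi' =>
    (hx (i + 1) (by simpa using hi')).2.trans (hx i (by simpa using hi)).1

theorem Interlaces.sum_abs_sub_le {α : Type*} [AddCommGroup α] [LinearOrder α]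
    [IsOrderedAddMonoid α] {B x y : ℕ → α} {m k : ℕ} (hmk : m ≤ k)
    (hx : Interlaces B x (Ioc m k)) (hy : Interlaces B y (Ioc m k)) :
    ∑ i ∈ Ioc m k, |x i - y i| ≤ B m - B k := by
  induction k, hmk using Nat.le_induction with
  | base => simp
  | succ k hmk ih =>
    have hsub : Ioc m k ⊆ Ioc m (k + 1) := Ioc_subset_Ioc_right k.le_succ
    have hk : k + 1 ∈ Ioc m (k + 1) := right_mem_Ioc.2 (Nat.lt_succ_of_le hmk)
    obtain ⟨hxk, hxk'⟩ := hx _ hk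
    obtain ⟨hyk, hyk'⟩ := hy _ hk
    rw [Nat.add_sub_cancel] at hxk' hyk'
    rw [sum_Ioc_succ_top hmk, ← sub_add_sub_cancel (B m) (B k)]
    exact add_le_add (ih (fun i hi => hx i (hsub hi)) (fun i hi => hy i (hsub hi)))
      (abs_sub_le_iff.2 ⟨sub_le_sub hxk' hyk, sub_le_sub hyk' hxk⟩)

theorem Int.even_sub_mul_add_sub_abs (x y m : ℤ) :
    Even ((x - y) * (x + y + 2 * m) - |x - y|) := by
  rcases abs_choice (x - y) with h | h <;> rw [h] <;>
    simp only [Int.even_sub, Int.even_add, Int.even_mul, even_neg, even_two, true_or, iff_true] <;>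
    tauto

theorem Int.even_sum_abs_sub_of_sum_eq_zero {ι : Type*} {t : Finset ι} {x y w : ι → ℤ}
    (h : ∑ i ∈ t, (x i - y i) * (x i + y i + 2 * w i) = 0) : Even (∑ i ∈ t, |x i - y i|) := by
  have := even_sum _ fun i (_ : i ∈ t) => Int.even_sub_mul_add_sub_abs (x i) (y i) (w i)
  rwa [sum_sub_distrib, h, zero_sub, even_neg] at this

theorem abs_sum_mul_le_sum_abs_mul {ι R : Type*} [Ring R] [LinearOrder R] [IsStrictOrderedRing R]
    {s : Finset ι} {c w : ι → R} {M : R} (hw : ∀ i ∈ s, 0 ≤ w i ∧ w i ≤ M) :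
    |∑ i ∈ s, c i * w i| ≤ (∑ i ∈ s, |c i|) * M := by
  rw [sum_mul]
  refine (abs_sum_le_sum_abs _ _).trans (sum_le_sum fun i hi => ?_)
  rw [abs_mul, abs_of_nonneg (hw i hi).1]
  exact mul_le_mul_of_nonneg_left (hw i hi).2 (abs_nonneg _)

theorem Int.mul_add_sum_mul_ne_zero {ι : Type*} {t : Finset ι} {c w : ι → ℤ} {c₀ w₀ : ℤ}
    (hc₀ : c₀ ≠ 0) (hw₀ : 0 < w₀) (hw : ∀ i ∈ t, 0 ≤ w i ∧ w i ≤ w₀ - 2)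
    (hc : ∑ i ∈ t, |c i| ≤ 2) (hpar : Even (|c₀| + ∑ i ∈ t, |c i|)) :
    c₀ * w₀ + ∑ i ∈ t, c i * w i ≠ 0 := by
  intro h
  have hc₀_pos : 0 < |c₀| := abs_pos.2 hc₀
  have hD : ∑ i ∈ t, |c i| ≤ |c₀| := by
    rw [Int.even_iff] at hpar
    omega
  have hdom : |c₀| * w₀ ≤ (∑ i ∈ t, |c i|) * (w₀ - 2) := by
    rw [← abs_of_pos hw₀, ← abs_mul, eq_neg_of_add_eq_zero_left h, abs_neg, abs_of_pos hw₀]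
    exact abs_sum_mul_le_sum_abs_mul hw
  nlinarith [mul_nonneg (sub_nonneg.2 hD) hw₀.le, mul_pos hc₀_pos hw₀,
    sum_nonneg fun i (_ : i ∈ t) => abs_nonneg (c i)]

theorem eqOn_Icc_of_sum_mul_add_two_mul_eq {m k : ℕ} {a a' : ℕ → ℤ}
    (ha : AntitoneOn a (Set.Icc m k)) (ha' : AntitoneOn a' (Set.Icc m k))
    (hak : 0 ≤ a k) (hak' : 0 ≤ a' k) (hslack : ∑ i ∈ Ioc m k, |a i - a' i| ≤ 2)
    (hsum : ∑ i ∈ Icc m k, a i * (a i + 2 * ((k : ℤ) - i)) =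
      ∑ i ∈ Icc m k, a' i * (a' i + 2 * ((k : ℤ) - i))) :
    ∀ i ∈ Icc m k, a i = a' i := by
  by_contra! hne
  obtain ⟨hj, hdj⟩ := Nat.find_spec hne
  set j := Nat.find hne
  have hjk := mem_Icc.1 hj
  have hbelow (i) (hi : i ∈ Ico m j) : a i = a' i := by
    rw [mem_Ico] at hi
    by_contra h
    exact Nat.find_min hne hi.2 ⟨mem_Icc.2 ⟨hi.1, by omega⟩, h⟩
  have hterms : ∑ i ∈ Icc j k, (a i - a' i) * (a i + a' i + 2 * ((k : ℤ) - i)) = 0 := by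
    rw [sum_subset (Icc_subset_Icc_left hjk.1) fun i hi hij => ?_, ← sub_eq_zero.2 hsum,
      ← sum_sub_distrib]
    · exact sum_congr rfl fun i _ => by ring
    · rw [hbelow i ?_, sub_self, zero_mul]
      simp only [mem_Icc, mem_Ico, not_and, not_le] at hi hij ⊢
      omega
  have hpar := Int.even_sum_abs_sub_of_sum_eq_zero (w := fun i : ℕ => (k : ℤ) - i) hterms
  rw [Icc_eq_cons_Ioc hjk.2, sum_cons] at hterms hpar
  have hbounds {i} (hi : i ∈ Set.Icc j k) :
      a k ≤ a i ∧ a i ≤ a j ∧ a' k ≤ a' i ∧ a' i ≤ a' j := by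
    have hja := ha.mono (Set.Icc_subset_Icc_left hjk.1)
    have hja' := ha'.mono (Set.Icc_subset_Icc_left hjk.1)
    have hj' : j ∈ Set.Icc j k := Set.left_mem_Icc.2 hjk.2
    have hk' : k ∈ Set.Icc j k := Set.right_mem_Icc.2 hjk.2
    exact ⟨hja hi hk' hi.2, hja hj' hi hi.1, hja' hi hk' hi.2, hja' hj' hi hi.1⟩
  refine Int.mul_add_sum_mul_ne_zero (sub_ne_zero.2 hdj) ?_ (fun i hi => ?_) ?_ hpar hterms
  · have := hbounds (Set.left_mem_Icc.2 hjk.2)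
    omega
  · have := hbounds (mem_Icc.1 (Ioc_subset_Icc_self hi))
    have := mem_Ioc.1 hi
    omega
  · exact (sum_le_sum_of_subset_of_nonneg (Ioc_subset_Ioc_left hjk.1)
      fun _ _ _ => abs_nonneg _).trans hslack

theorem so_form_injective_b2_eq_two_general (n : ℕ) (b a a' : ℕ → ℤ)
    (hb2 : b 2 = 2)
    (ha1 : ∀ i, 2 ≤ i → i ≤ n - 1 → a i ≤ b (i - 1) ∧ b i ≤ a i)
    (ha2 : 0 ≤ a n ∧ a n ≤ b (n - 1))
    (ha1' : ∀ i, 2 ≤ i → i ≤ n - 1 → a' i ≤ b (i - 1) ∧ b i ≤ a' i)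
    (ha2' : 0 ≤ a' n ∧ a' n ≤ b (n - 1))
    (hsum : ∑ i ∈ Finset.Icc 2 n, a i * (a i + 2 * ((n : ℤ) - (i : ℤ))) =
      ∑ i ∈ Finset.Icc 2 n, a' i * (a' i + 2 * ((n : ℤ) - (i : ℤ)))) :
    ∀ i, 2 ≤ i → i ≤ n → a i = a' i := by
  intro i hi hin
  have ha := interlaces_update_zero two_pos ha1 ha2
  have ha' := interlaces_update_zero two_pos ha1' ha2'
  have hslack : ∑ i ∈ Ioc 2 n, |a i - a' i| ≤ 2 :=
    calc _ ≤ Function.update b n 0 2 - Function.update b n 0 n :=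
          Interlaces.sum_abs_sub_le (hi.trans hin) (fun i hi => ha i (Ioc_subset_Icc_self hi))
            (fun i hi => ha' i (Ioc_subset_Icc_self hi))
      _ ≤ 2 := by
          rw [Function.update_self, Function.update_apply]
          split_ifs <;> omega
  exact eqOn_Icc_of_sum_mul_add_two_mul_eq ha.antitoneOn ha'.antitoneOn ha2.1 ha2'.1 hslack hsum
    i (mem_Icc.2 ⟨hi, hin⟩)

/-- Corollary 4.3(iii)-type condition: for `n ≥ 2` and integers
`b 1 ≥ 2 = b 2 ≥ b 3 ≥ ⋯ ≥ b (n-1) ≥ 0`, the quadratic form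
`(a₂,…,aₙ) ↦ ∑_{i=2}^{n} aᵢ(aᵢ + 2(n-i))` is injective on the interlacing set
`T = {a ∈ ℤ^{n-1} : b₁ ≥ a₂ ≥ b₂ ≥ a₃ ≥ ⋯ ≥ b_{n-1} ≥ aₙ ≥ 0}`. -/
theorem so_form_injective_b2_eq_two (n : ℕ) (hn : 2 ≤ n) (b a a' : ℕ → ℤ)
    (hbmono : ∀ i, 1 ≤ i → i ≤ n - 2 → b (i + 1) ≤ b i)
    (hbnn : 0 ≤ b (n - 1)) (hb2 : b 2 = 2)
    (ha1 : ∀ i, 2 ≤ i → i ≤ n - 1 → a i ≤ b (i - 1) ∧ b i ≤ a i)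
    (ha2 : 0 ≤ a n ∧ a n ≤ b (n - 1))
    (ha1' : ∀ i, 2 ≤ i → i ≤ n - 1 → a' i ≤ b (i - 1) ∧ b i ≤ a' i)
    (ha2' : 0 ≤ a' n ∧ a' n ≤ b (n - 1))
    (hsum : ∑ i ∈ Finset.Icc 2 n, a i * (a i + 2 * ((n : ℤ) - (i : ℤ))) =
      ∑ i ∈ Finset.Icc 2 n, a' i * (a' i + 2 * ((n : ℤ) - (i : ℤ)))) :
    ∀ i, 2 ≤ i → i ≤ n → a i = a' i :=
  so_form_injective_b2_eq_two_general n b a a' hb2 ha1 ha2 ha1' ha2' hsum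
end

section
/- For n ≥ 2, with ε₁,…,ε_{n+1} the standard basis of ℝ^{n+1} and ρ the half-sum of positive roots of su(n+1), so that ⟨Λ, 2ρ⟩ = Σ_j a_j(n+2−2j) for Λ = Σ a_jε_j with Σ a_j = 0: letting Λ₀ = (n−1)ε₁ + ε₂ − Σ_{i=3}^{n} ε_i − 2ε_{n+1}, Λ₀' = n·ε₁ − Σ_{i=2}^{n} ε_i − ε_{n+1}, and ω = ε₁ − ε_{n+1}, one has ⟨ω, Λ₀ − Λ₀'⟩ = 0 and ⟨Λ₀, Λ₀ + 2ρ⟩ = ⟨Λ₀', Λ₀' + 2ρ⟩, hence ⟨kω + Λ₀, kω + Λ₀ + 2ρ⟩ = ⟨kω + Λ₀', kω + Λ₀' + 2ρ⟩ for all k ∈ ℕ. -/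
/-- The standard inner product on `ℝⁿ` (as `Fin n → ℝ`). -/
def stdInner {n : ℕ} (x y : Fin n → ℝ) : ℝ := ∑ i, x i * y i

lemma stdInner_comm' {n : ℕ} (x y : Fin n → ℝ) : stdInner x y = stdInner y x := by
  simp [stdInner, mul_comm]

lemma stdInner_add_left' {n : ℕ} (x y z : Fin n → ℝ) :
    stdInner (x + y) z = stdInner x z + stdInner y z := by
  simp [stdInner, add_mul, Finset.sum_add_distrib]

lemma stdInner_add_right' {n : ℕ} (x y z : Fin n → ℝ) :
    stdInner x (y + z) = stdInner x y + stdInner x z := by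
  simp [stdInner, mul_add, Finset.sum_add_distrib]

lemma stdInner_sub_right' {n : ℕ} (x y z : Fin n → ℝ) :
    stdInner x (y - z) = stdInner x y - stdInner x z := by
  simp [stdInner, mul_sub, Finset.sum_sub_distrib]

lemma stdInner_sub_left' {n : ℕ} (x y z : Fin n → ℝ) :
    stdInner (x - y) z = stdInner x z - stdInner y z := by
  simp [stdInner, sub_mul, Finset.sum_sub_distrib]

lemma stdInner_smul_left' {n : ℕ} (c : ℝ) (x y : Fin n → ℝ) :
    stdInner (c • x) y = c * stdInner x y := by
  simp [stdInner, Finset.mul_sum, mul_assoc, mul_left_comm]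

lemma stdInner_smul_right' {n : ℕ} (c : ℝ) (x y : Fin n → ℝ) :
    stdInner x (c • y) = c * stdInner x y := by
  simp [stdInner, Finset.mul_sum, mul_left_comm]

lemma sum_three' (m : ℕ) (g : ℕ → ℝ) (hmid : ∀ i < m, g (i + 2) = 0) :
    ∑ i ∈ Finset.range (m + 3), g i = g 0 + g 1 + g (m + 2) := by
  rw [Finset.sum_range_succ, Finset.sum_range_succ', Finset.sum_range_succ',
    Finset.sum_eq_zero (fun i hi => hmid i (Finset.mem_range.mp hi))]
  ring

/-- Example 6.6 for SU(n+1), n ≥ 2: in `ℝ^{n+1}` (0-indexed basis, so `ε₁` has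
index 0 and `ε_{n+1}` has index n), with `2ρ = ∑ⱼ (n+2-2j)εⱼ` (1-indexed, so
`ρ` has index-`i` entry `n/2 - i`), `ω = ε₁ - ε_{n+1}`,
`Λ₀ = (n-1)ε₁ + ε₂ - ∑_{i=3}^{n} εᵢ - 2ε_{n+1}` and
`Λ₀' = nε₁ - ∑_{i=2}^{n} εᵢ - ε_{n+1}`, one has `⟨ω, Λ₀ - Λ₀'⟩ = 0` and
`⟨Λ₀, Λ₀ + 2ρ⟩ = ⟨Λ₀', Λ₀' + 2ρ⟩`, hence
`⟨kω + Λ₀, kω + Λ₀ + 2ρ⟩ = ⟨kω + Λ₀', kω + Λ₀' + 2ρ⟩` for all `k ∈ ℕ`. -/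
theorem su_strings_same_eigenvalues (n : ℕ) (hn : 2 ≤ n)
    (ω ρ Λ₀ Λ₀' : Fin (n + 1) → ℝ)
    (hω : ω = fun i : Fin (n + 1) =>
      if (i : ℕ) = 0 then 1 else if (i : ℕ) = n then -1 else 0)
    (hρ : ρ = fun i : Fin (n + 1) => (n : ℝ) / 2 - ((i : ℕ) : ℝ))
    (hΛ : Λ₀ = fun i : Fin (n + 1) =>
      if (i : ℕ) = 0 then (n : ℝ) - 1 else if (i : ℕ) = 1 then 1
      else if (i : ℕ) = n then -2 else -1)
    (hΛ' : Λ₀' = fun i : Fin (n + 1) =>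
      if (i : ℕ) = 0 then (n : ℝ) else -1) :
    stdInner ω (Λ₀ - Λ₀') = 0 ∧
    stdInner Λ₀ (Λ₀ + (2 : ℝ) • ρ) = stdInner Λ₀' (Λ₀' + (2 : ℝ) • ρ) ∧
    ∀ k : ℕ,
      stdInner ((k : ℝ) • ω + Λ₀) ((k : ℝ) • ω + Λ₀ + (2 : ℝ) • ρ) =
        stdInner ((k : ℝ) • ω + Λ₀') ((k : ℝ) • ω + Λ₀' + (2 : ℝ) • ρ) := by
  obtain ⟨m, rfl⟩ : ∃ m, n = m + 2 := ⟨n - 2, by omega⟩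
  have hA : stdInner ω (Λ₀ - Λ₀') = 0 := by
    rw [hω, hΛ, hΛ']
    let g : ℕ → ℝ := fun j : ℕ =>
      (if j = 0 then (1 : ℝ) else if j = m + 2 then -1 else 0) *
        ((if j = 0 then ((m + 2 : ℕ) : ℝ) - 1 else if j = 1 then 1
            else if j = m + 2 then -2 else -1) -
          (if j = 0 then ((m + 2 : ℕ) : ℝ) else -1))
    show (∑ i : Fin (m + 3), g (i : ℕ)) = 0
    refine Eq.trans (Fin.sum_univ_eq_sum_range g (m + 3)) ?_
    rw [sum_three']
    all_goals simp only [g]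
    · norm_num [show m + 2 ≠ 1 by omega, show m + 2 ≠ 0 by omega]
    · intro i hi
      have h2 : i + 2 ≠ 0 := by omega
      have h3 : i + 2 ≠ 1 := by omega
      have h4 : i + 2 ≠ m + 2 := by omega
      simp [h2, h3, h4, show i ≠ m by omega]
  have hB : stdInner (Λ₀ - Λ₀') (Λ₀ + Λ₀' + (2 : ℝ) • ρ) = 0 := by
    rw [hΛ, hΛ', hρ]
    let g : ℕ → ℝ := fun j : ℕ =>
      ((if j = 0 then ((m + 2 : ℕ) : ℝ) - 1 else if j = 1 then 1
          else if j = m + 2 then -2 else -1) -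
        (if j = 0 then ((m + 2 : ℕ) : ℝ) else -1)) *
      ((if j = 0 then ((m + 2 : ℕ) : ℝ) - 1 else if j = 1 then 1
          else if j = m + 2 then -2 else -1) +
        (if j = 0 then ((m + 2 : ℕ) : ℝ) else -1) +
        2 * (((m + 2 : ℕ) : ℝ) / 2 - (j : ℝ)))
    show (∑ i : Fin (m + 3), g (i : ℕ)) = 0
    refine Eq.trans (Fin.sum_univ_eq_sum_range g (m + 3)) ?_
    rw [sum_three']
    all_goals simp only [g]
    · have e1 : m + 2 ≠ 1 := by omega
      have e0 : m + 2 ≠ 0 := by omega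
      norm_num [e1, e0]
      ring
    · intro i hi
      have h2 : i + 2 ≠ 0 := by omega
      have h3 : i + 2 ≠ 1 := by omega
      have h4 : i + 2 ≠ m + 2 := by omega
      simp [h2, h3, h4, show i ≠ m by omega]
  have hA' : stdInner ω Λ₀ = stdInner ω Λ₀' := by
    rw [stdInner_sub_right'] at hA; linarith
  have hB' : stdInner Λ₀ (Λ₀ + (2 : ℝ) • ρ) = stdInner Λ₀' (Λ₀' + (2 : ℝ) • ρ) := by
    simp only [stdInner_sub_left', stdInner_add_right', stdInner_smul_right'] at hB ⊢
    have hc := stdInner_comm' Λ₀ Λ₀'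
    linarith
  refine ⟨hA, hB', fun k => ?_⟩
  have hB'' := hB'
  simp only [stdInner_add_left', stdInner_add_right', stdInner_smul_left',
    stdInner_smul_right'] at hB'' ⊢
  have hc1 := stdInner_comm' Λ₀ ω
  have hc2 := stdInner_comm' Λ₀' ω
  nlinarith [hA', hB'', hc1, hc2]
end
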